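/- Consider the almost paracontact metric Walker structure on ℝ³ with ξ₂ ≡ 1, ξ₃ ≡ 0 and an arbitrary smooth function ξ₁ : ℝ³ → ℝ (so ξ = ξ₁∂x + ∂y, η = dy + ξ₁ dz, φ∂x = −∂x, φ∂y = ξ₁∂x, φ∂z = −f∂x − ξ₁∂y + ∂z). Then the structure is almost paracosymplectic but not paracosymplectic — i.e. dη(∂i,∂j) = 0 everywhere, dΦ(∂x,∂y,∂z) = 0 everywhere, and the structure tensor F is nonzero at every point — if and only if (ξ₁)_x ≡ 0, (ξ₁)_y ≡ 0 and 2(ξ₁)_z + ξ₁ f_x + f_y vanishes nowhere on ℝ³ (Theorem 4.4(iv)). -/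

import Mathlib

open Real

/-- Points of the Walker manifold `M = ℝ³` with coordinates `(x,y,z)`. -/
abbrev Pt : Type := ℝ × ℝ × ℝ

/-- Vector fields on `ℝ³`, given by their components in the frame `∂x, ∂y, ∂z`. -/
abbrev VF : Type := Pt → Pt

/-- Partial derivative ∂/∂x. -/
noncomputable def pdx (F : Pt → ℝ) (p : Pt) : ℝ := fderiv ℝ F p ((1:ℝ), (0:ℝ), (0:ℝ))

/-- Partial derivative ∂/∂y. -/
noncomputable def pdy (F : Pt → ℝ) (p : Pt) : ℝ := fderiv ℝ F p ((0:ℝ), (1:ℝ), (0:ℝ))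

/-- Partial derivative ∂/∂z. -/
noncomputable def pdz (F : Pt → ℝ) (p : Pt) : ℝ := fderiv ℝ F p ((0:ℝ), (0:ℝ), (1:ℝ))

/-- Directional derivative of a scalar function along a vector field. -/
noncomputable def dd (X : VF) (F : Pt → ℝ) (p : Pt) : ℝ := fderiv ℝ F p (X p)

/-- Components of a tangent vector. -/
def c1 (v : Pt) : ℝ := v.1
def c2 (v : Pt) : ℝ := v.2.1
def c3 (v : Pt) : ℝ := v.2.2

/-- The coordinate vector fields `∂x, ∂y, ∂z`. -/
noncomputable def E : Fin 3 → VF :=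
  ![fun _ => ((1:ℝ), (0:ℝ), (0:ℝ)), fun _ => ((0:ℝ), (1:ℝ), (0:ℝ)),
    fun _ => ((0:ℝ), (0:ℝ), (1:ℝ))]

/-- The Walker metric with `ε = 1`: `g(∂x,∂z) = g(∂z,∂x) = 1`, `g(∂y,∂y) = 1`,
`g(∂z,∂z) = f`, all other components zero. -/
noncomputable def gm (f : Pt → ℝ) (X Y : VF) (p : Pt) : ℝ :=
  c1 (X p) * c3 (Y p) + c3 (X p) * c1 (Y p) + c2 (X p) * c2 (Y p)
    + f p * c3 (X p) * c3 (Y p)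

/-- The Levi-Civita connection of the Walker metric:
`∇_{∂x}∂z = ∇_{∂z}∂x = (1/2) f_x ∂x`, `∇_{∂y}∂z = ∇_{∂z}∂y = (1/2) f_y ∂x`,
`∇_{∂z}∂z = (1/2)(f f_x + f_z) ∂x - (1/2) f_y ∂y - (1/2) f_x ∂z`, all other covariant
derivatives of coordinate fields zero, extended by `C^∞`-linearity below and the
Leibniz rule above. -/
noncomputable def cov (f : Pt → ℝ) (X Y : VF) : VF := fun p =>
  ( dd X (fun q => c1 (Y q)) p
      + (1/2) * pdx f p * (c1 (X p) * c3 (Y p) + c3 (X p) * c1 (Y p))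
      + (1/2) * pdy f p * (c2 (X p) * c3 (Y p) + c3 (X p) * c2 (Y p))
      + (1/2) * (f p * pdx f p + pdz f p) * (c3 (X p) * c3 (Y p)),
    dd X (fun q => c2 (Y q)) p - (1/2) * pdy f p * (c3 (X p) * c3 (Y p)),
    dd X (fun q => c3 (Y q)) p - (1/2) * pdx f p * (c3 (X p) * c3 (Y p)) )

/-- Lie bracket of vector fields on `ℝ³`. -/
noncomputable def brk (X Y : VF) : VF := fun p =>
  ( dd X (fun q => c1 (Y q)) p - dd Y (fun q => c1 (X q)) p,
    dd X (fun q => c2 (Y q)) p - dd Y (fun q => c2 (X q)) p,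
    dd X (fun q => c3 (Y q)) p - dd Y (fun q => c3 (X q)) p )

/-- The `(1,1)`-tensor `φ` of the almost paracontact metric Walker structure:
`φ∂x = -ξ₂∂x + ξ₃∂y`, `φ∂y = (ξ₁ + fξ₃)∂x - ξ₃∂z`, `φ∂z = -fξ₂∂x - ξ₁∂y + ξ₂∂z`. -/
noncomputable def phiV (f ξ₁ ξ₂ ξ₃ : Pt → ℝ) (X : VF) : VF := fun p =>
  ( -ξ₂ p * c1 (X p) + (ξ₁ p + f p * ξ₃ p) * c2 (X p) - f p * ξ₂ p * c3 (X p),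
    ξ₃ p * c1 (X p) - ξ₁ p * c3 (X p),
    -ξ₃ p * c2 (X p) + ξ₂ p * c3 (X p) )

/-- The 1-form `η = ξ₃ dx + ξ₂ dy + (ξ₁ + fξ₃) dz`. -/
noncomputable def etaV (f ξ₁ ξ₂ ξ₃ : Pt → ℝ) (X : VF) (p : Pt) : ℝ :=
  ξ₃ p * c1 (X p) + ξ₂ p * c2 (X p) + (ξ₁ p + f p * ξ₃ p) * c3 (X p)

/-- The structure tensor `F(X,Y,Z) = g((∇_X φ)Y, Z)`, `(∇_X φ)Y = ∇_X(φY) - φ(∇_X Y)`. -/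
noncomputable def Ften (f ξ₁ ξ₂ ξ₃ : Pt → ℝ) (X Y Z : VF) (p : Pt) : ℝ :=
  gm f (fun q => cov f X (phiV f ξ₁ ξ₂ ξ₃ Y) q - phiV f ξ₁ ξ₂ ξ₃ (cov f X Y) q) Z p

/-- The fundamental 2-form `Φ(X,Y) = g(φX, Y)`. -/
noncomputable def Phi2 (f ξ₁ ξ₂ ξ₃ : Pt → ℝ) (X Y : VF) : Pt → ℝ :=
  gm f (phiV f ξ₁ ξ₂ ξ₃ X) Y

/-- `dη(∂i,∂j) = (1/2)(∂i(η(∂j)) - ∂j(η(∂i)))` on coordinate fields. -/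
noncomputable def deta (f ξ₁ ξ₂ ξ₃ : Pt → ℝ) (i j : Fin 3) (p : Pt) : ℝ :=
  (1/2) * (dd (E i) (etaV f ξ₁ ξ₂ ξ₃ (E j)) p - dd (E j) (etaV f ξ₁ ξ₂ ξ₃ (E i)) p)

/-- `dη(X,Y) = (1/2)(X(η(Y)) - Y(η(X)) - η([X,Y]))` on general vector fields. -/
noncomputable def detaB (f ξ₁ ξ₂ ξ₃ : Pt → ℝ) (X Y : VF) (p : Pt) : ℝ :=
  (1/2) * (dd X (etaV f ξ₁ ξ₂ ξ₃ Y) p - dd Y (etaV f ξ₁ ξ₂ ξ₃ X) p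
    - etaV f ξ₁ ξ₂ ξ₃ (brk X Y) p)

/-- The Nijenhuis tensor `N(X,Y) = φ²[X,Y] + [φX,φY] - φ[φX,Y] - φ[X,φY]`. -/
noncomputable def nij (f ξ₁ ξ₂ ξ₃ : Pt → ℝ) (X Y : VF) : VF := fun p =>
  phiV f ξ₁ ξ₂ ξ₃ (phiV f ξ₁ ξ₂ ξ₃ (brk X Y)) p
    + brk (phiV f ξ₁ ξ₂ ξ₃ X) (phiV f ξ₁ ξ₂ ξ₃ Y) p
    - phiV f ξ₁ ξ₂ ξ₃ (brk (phiV f ξ₁ ξ₂ ξ₃ X) Y) p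
    - phiV f ξ₁ ξ₂ ξ₃ (brk X (phiV f ξ₁ ξ₂ ξ₃ Y)) p

/-- The curvature tensor, with the paper's sign convention
`R(X,Y)Z = ∇_{[X,Y]}Z - ∇_X∇_Y Z + ∇_Y∇_X Z`. -/
noncomputable def Rop (f : Pt → ℝ) (X Y Z : VF) : VF := fun p =>
  cov f (brk X Y) Z p - cov f X (cov f Y Z) p + cov f Y (cov f X Z) p

/-- Second partial derivatives of `f`. -/
noncomputable def fxx (f : Pt → ℝ) : Pt → ℝ := pdx (pdx f)
noncomputable def fxy (f : Pt → ℝ) : Pt → ℝ := pdy (pdx f)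
noncomputable def fyy (f : Pt → ℝ) : Pt → ℝ := pdy (pdy f)

/-- The Ricci tensor of the Walker metric: `ρ(∂x,∂z) = ρ(∂z,∂x) = (1/2) f_xx`,
`ρ(∂y,∂z) = ρ(∂z,∂y) = (1/2) f_xy`, `ρ(∂z,∂z) = (1/2)(f f_xx - f_yy)`, all other
components zero, extended tensorially. -/
noncomputable def rhoT (f : Pt → ℝ) (X Y : VF) (p : Pt) : ℝ :=
  (1/2) * fxx f p * (c1 (X p) * c3 (Y p) + c3 (X p) * c1 (Y p))
    + (1/2) * fxy f p * (c2 (X p) * c3 (Y p) + c3 (X p) * c2 (Y p))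
    + (1/2) * (f p * fxx f p - fyy f p) * (c3 (X p) * c3 (Y p))

/-- The Ricci operator: `Q∂x = (1/2)f_xx ∂x`, `Q∂y = (1/2)f_xy ∂x`,
`Q∂z = -(1/2)f_yy ∂x + (1/2)f_xy ∂y + (1/2)f_xx ∂z`. -/
noncomputable def Qop (f : Pt → ℝ) (X : VF) : VF := fun p =>
  ( (1/2) * fxx f p * c1 (X p) + (1/2) * fxy f p * c2 (X p) - (1/2) * fyy f p * c3 (X p),
    (1/2) * fxy f p * c3 (X p),
    (1/2) * fxx f p * c3 (X p) )

/-- `dΦ(∂x,∂y,∂z) = ∂x(Φ(∂y,∂z)) - ∂y(Φ(∂x,∂z)) + ∂z(Φ(∂x,∂y))`. -/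
noncomputable def dPhi (f ξ₁ ξ₂ ξ₃ : Pt → ℝ) (p : Pt) : ℝ :=
  pdx (Phi2 f ξ₁ ξ₂ ξ₃ (E 1) (E 2)) p - pdy (Phi2 f ξ₁ ξ₂ ξ₃ (E 0) (E 2)) p
    + pdz (Phi2 f ξ₁ ξ₂ ξ₃ (E 0) (E 1)) p

/-- `(η∧Φ)(∂x,∂y,∂z) = η(∂x)Φ(∂y,∂z) - η(∂y)Φ(∂x,∂z) + η(∂z)Φ(∂x,∂y)`. -/
noncomputable def etaWedgePhi (f ξ₁ ξ₂ ξ₃ : Pt → ℝ) (p : Pt) : ℝ :=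
  etaV f ξ₁ ξ₂ ξ₃ (E 0) p * Phi2 f ξ₁ ξ₂ ξ₃ (E 1) (E 2) p
    - etaV f ξ₁ ξ₂ ξ₃ (E 1) p * Phi2 f ξ₁ ξ₂ ξ₃ (E 0) (E 2) p
    + etaV f ξ₁ ξ₂ ξ₃ (E 2) p * Phi2 f ξ₁ ξ₂ ξ₃ (E 0) (E 1) p

/-- The constant function `0`. -/
noncomputable def zeroF : Pt → ℝ := fun _ => 0
/-- The constant function `1`. -/
noncomputable def oneF : Pt → ℝ := fun _ => 1
/-- The constant function `-1`. -/
noncomputable def negOneF : Pt → ℝ := fun _ => -1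

/-!
Here `η = dy + ξ₁ dz`, so `dη = ½ dξ₁ ∧ dz` vanishes exactly when `ξ₁` depends on `z` alone, and
`Φ = -dx ∧ dz + ξ₁ dy ∧ dz`, so `dΦ = (ξ₁)_x dx ∧ dy ∧ dz`. A direct computation with the
Christoffel symbols gives `∇_X φ = ω(X) (∂x ⊗ dy - ∂y ⊗ dz)` with
`ω = dξ₁ + ½ (ξ₁ f_x + f_y) dz`, hence `F(X,Y,Z) = ω(X) (Y² Z³ - Y³ Z²)`. So `F` is nonzero at a
point iff `ω` is, which, once `(ξ₁)_x = (ξ₁)_y = 0`, means `2 (ξ₁)_z + ξ₁ f_x + f_y ≠ 0`.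
-/

@[simp] lemma E_zero_apply (p : Pt) : E 0 p = (1, 0, 0) := rfl
@[simp] lemma E_one_apply (p : Pt) : E 1 p = (0, 1, 0) := rfl
@[simp] lemma E_two_apply (p : Pt) : E 2 p = (0, 0, 1) := rfl

lemma dd_E_zero (F : Pt → ℝ) : dd (E 0) F = pdx F := rfl
lemma dd_E_one (F : Pt → ℝ) : dd (E 1) F = pdy F := rfl

section
variable (f ξ₁ : Pt → ℝ)

lemma etaV_E (j : Fin 3) :
    etaV f ξ₁ oneF zeroF (E j) = fun p => c2 (E j p) + c3 (E j p) * ξ₁ p := by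
  funext p
  simp only [etaV, oneF, zeroF]
  ring

lemma deta_eq (i j : Fin 3) (p : Pt) :
    deta f ξ₁ oneF zeroF i j p
      = (1/2) * (c3 (E j p) * dd (E i) ξ₁ p - c3 (E i p) * dd (E j) ξ₁ p) := by
  have h (i j : Fin 3) : dd (E i) (etaV f ξ₁ oneF zeroF (E j)) p = c3 (E j p) * dd (E i) ξ₁ p := by
    rw [dd, dd, etaV_E]
    fin_cases j <;> simp [c2, c3]
  rw [deta, h, h]

lemma forall_deta_eq_zero_iff :
    (∀ (i j : Fin 3) (p : Pt), deta f ξ₁ oneF zeroF i j p = 0) ↔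
      (∀ p, pdx ξ₁ p = 0) ∧ (∀ p, pdy ξ₁ p = 0) := by
  constructor
  · intro h
    refine ⟨fun p => ?_, fun p => ?_⟩
    · simpa [deta_eq, c3, dd_E_zero] using h 0 2 p
    · simpa [deta_eq, c3, dd_E_one] using h 1 2 p
  · rintro ⟨hx, hy⟩ i j p
    fin_cases i <;> fin_cases j <;> simp [deta_eq, c3, dd_E_zero, dd_E_one, hx p, hy p]

lemma phiV_E_zero : phiV f ξ₁ oneF zeroF (E 0) = fun _ => ((-1:ℝ), (0:ℝ), (0:ℝ)) := by
  funext p; simp [phiV, oneF, zeroF, c1, c2, c3]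
lemma phiV_E_one : phiV f ξ₁ oneF zeroF (E 1) = fun p => (ξ₁ p, (0:ℝ), (0:ℝ)) := by
  funext p; simp [phiV, oneF, zeroF, c1, c2, c3]

lemma dPhi_eq : dPhi f ξ₁ oneF zeroF = pdx ξ₁ := by
  have h12 : Phi2 f ξ₁ oneF zeroF (E 1) (E 2) = ξ₁ := by
    funext q; simp [Phi2, gm, phiV_E_one, c1, c2, c3]
  have h02 : Phi2 f ξ₁ oneF zeroF (E 0) (E 2) = fun _ => (-1:ℝ) := by
    funext q; simp [Phi2, gm, phiV_E_zero, c1, c2, c3]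
  have h01 : Phi2 f ξ₁ oneF zeroF (E 0) (E 1) = fun _ => (0:ℝ) := by
    funext q; simp [Phi2, gm, phiV_E_zero, c1, c2, c3]
  funext p
  simp [dPhi, h12, h02, h01, pdy, pdz]

/-- The coefficients `ω(∂x), ω(∂y), ω(∂z)` in `∇_X φ = ω(X) (∂x ⊗ dy - ∂y ⊗ dz)`. -/
noncomputable def nablaPhiCoeff : Fin 3 → Pt → ℝ :=
  ![pdx ξ₁, pdy ξ₁, fun p => (1/2) * (2 * pdz ξ₁ p + ξ₁ p * pdx f p + pdy f p)]

lemma cov_phiV_E (i j : Fin 3) (p : Pt) :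
    cov f (E i) (phiV f ξ₁ oneF zeroF (E j)) p - phiV f ξ₁ oneF zeroF (cov f (E i) (E j)) p
      = nablaPhiCoeff f ξ₁ i p • (c2 (E j p), -c3 (E j p), (0:ℝ)) := by
  fin_cases i <;> fin_cases j <;> ext <;>
    simp [nablaPhiCoeff, cov, phiV, oneF, zeroF, c1, c2, c3,
      dd, pdx, pdy, pdz, fderiv_fun_neg] <;> ring


lemma Ften_E (i j k : Fin 3) (p : Pt) :
    Ften f ξ₁ oneF zeroF (E i) (E j) (E k) p
      = nablaPhiCoeff f ξ₁ i p * (c2 (E j p) * c3 (E k p) - c3 (E j p) * c2 (E k p)) := by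
  simp only [Ften, gm, cov_phiV_E, c1, c2, c3, Prod.smul_mk, smul_eq_mul]
  ring

lemma exists_Ften_ne_zero_iff (p : Pt) :
    (∃ i j k : Fin 3, Ften f ξ₁ oneF zeroF (E i) (E j) (E k) p ≠ 0) ↔
      ∃ i : Fin 3, nablaPhiCoeff f ξ₁ i p ≠ 0 := by
  constructor
  · rintro ⟨i, j, k, h⟩
    rw [Ften_E] at h
    exact ⟨i, left_ne_zero_of_mul h⟩
  · rintro ⟨i, h⟩
    exact ⟨i, 1, 2, by simpa [Ften_E, c2, c3] using h⟩

end

theorem almost_paracosymplectic_iff_general (f ξ₁ : Pt → ℝ) :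
    ((∀ (i j : Fin 3) (p : Pt), deta f ξ₁ oneF zeroF i j p = 0) ∧
      (∀ p : Pt, dPhi f ξ₁ oneF zeroF p = 0) ∧
      (∀ p : Pt, ∃ i j k : Fin 3, Ften f ξ₁ oneF zeroF (E i) (E j) (E k) p ≠ 0)) ↔
    ((∀ p : Pt, pdx ξ₁ p = 0) ∧ (∀ p : Pt, pdy ξ₁ p = 0) ∧
      (∀ p : Pt, 2 * pdz ξ₁ p + ξ₁ p * pdx f p + pdy f p ≠ 0)) := by
  have hF {p : Pt} (hx : pdx ξ₁ p = 0) (hy : pdy ξ₁ p = 0) :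
      (∃ i j k : Fin 3, Ften f ξ₁ oneF zeroF (E i) (E j) (E k) p ≠ 0) ↔
        2 * pdz ξ₁ p + ξ₁ p * pdx f p + pdy f p ≠ 0 := by
    rw [exists_Ften_ne_zero_iff]
    simp [Fin.exists_fin_succ, nablaPhiCoeff, hx, hy]
  rw [forall_deta_eq_zero_iff, dPhi_eq]
  constructor
  · rintro ⟨⟨hx, hy⟩, -, hne⟩
    exact ⟨hx, hy, fun p => (hF (hx p) (hy p)).1 (hne p)⟩
  · rintro ⟨hx, hy, hne⟩
    exact ⟨⟨hx, hy⟩, hx, fun p => (hF (hx p) (hy p)).2 (hne p)⟩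

/-- Theorem 4.4(iv): the structure with `ξ₂ ≡ 1`, `ξ₃ ≡ 0` is almost paracosymplectic
but not paracosymplectic iff `(ξ₁)_x ≡ 0`, `(ξ₁)_y ≡ 0` and `2(ξ₁)_z + ξ₁ f_x + f_y`
vanishes nowhere. -/
theorem almost_paracosymplectic_iff (f ξ₁ : Pt → ℝ)
    (hf : ContDiff ℝ (⊤ : ℕ∞) f) (h1 : ContDiff ℝ (⊤ : ℕ∞) ξ₁) :
    ((∀ (i j : Fin 3) (p : Pt), deta f ξ₁ oneF zeroF i j p = 0) ∧
      (∀ p : Pt, dPhi f ξ₁ oneF zeroF p = 0) ∧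
      (∀ p : Pt, ∃ i j k : Fin 3, Ften f ξ₁ oneF zeroF (E i) (E j) (E k) p ≠ 0)) ↔
    ((∀ p : Pt, pdx ξ₁ p = 0) ∧ (∀ p : Pt, pdy ξ₁ p = 0) ∧
      (∀ p : Pt, 2 * pdz ξ₁ p + ξ₁ p * pdx f p + pdy f p ≠ 0)) :=
  almost_paracosymplectic_iff_general f ξ₁
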